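/- arXiv:2401.00657 — 2 statements merged into one kernel-verified Lean document; each statement's English description precedes it below -/
import Mathlib

section
/- The matrix Q = θ(P+θI)⁻¹((R+θI)⁻¹(θI−P) − I) satisfies the identity I + 2Q = (P+θI)⁻¹(R+θI)⁻¹(θI−R)(θI−P). -/
/-! Multiplying on the left by `(R + θI)(P + θI)` turns the identity into the polynomial identity
`(R + θI)(P + θI) + 2θ(θI - P) - 2θ(R + θI) = (θI - R)(θI - P)`; the two factors are invertible
because a positive semidefinite matrix plus `θI`, `θ > 0`, is positive definite. -/

open Matrix

theorem add_smul_one_mul_add_smul_one_sub {K A : Type*} [CommRing K] [Ring A] [Algebra K A]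
    (θ : K) (p r : A) :
    (r + θ • 1) * (p + θ • 1) + (2 * θ) • (θ • 1 - p) - (2 * θ) • (r + θ • 1) =
      (θ • 1 - r) * (θ • 1 - p) := by
  simp only [mul_add, add_mul, mul_sub, sub_mul, smul_mul_assoc, mul_smul_comm, one_mul, mul_one]
  module

theorem Matrix.one_add_two_smul_smul_inv_mul_eq {ι K : Type*} [Fintype ι] [DecidableEq ι]
    [CommRing K] (θ : K) (P R : Matrix ι ι K) (hS : IsUnit (P + θ • 1))
    (hT : IsUnit (R + θ • 1)) :
    1 + (2 : K) • (θ • ((P + θ • 1)⁻¹ * ((R + θ • 1)⁻¹ * (θ • 1 - P) - 1))) =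
      (P + θ • 1)⁻¹ * ((R + θ • 1)⁻¹ * ((θ • 1 - R) * (θ • 1 - P))) := by
  set S := P + θ • (1 : Matrix ι ι K)
  set T := R + θ • (1 : Matrix ι ι K)
  have hS : IsUnit S.det := (isUnit_iff_isUnit_det S).mp hS
  have hT : IsUnit T.det := (isUnit_iff_isUnit_det T).mp hT
  calc 1 + (2 : K) • (θ • (S⁻¹ * (T⁻¹ * (θ • 1 - P) - 1)))
      = S⁻¹ * (T⁻¹ * (T * S + (2 * θ) • (θ • 1 - P) - (2 * θ) • T)) := by
        simp only [mul_add, mul_sub, mul_smul_comm, nonsing_inv_mul_cancel_left _ _ hT,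
          nonsing_inv_mul _ hT, nonsing_inv_mul _ hS, mul_one, smul_sub, smul_smul]
        module
    _ = S⁻¹ * (T⁻¹ * ((θ • 1 - R) * (θ • 1 - P))) := by
        rw [add_smul_one_mul_add_smul_one_sub]

theorem Matrix.PosSemidef.isUnit_add_smul_one {ι K : Type*} [Fintype ι] [DecidableEq ι] [Field K]
    [PartialOrder K] [StarRing K] [StarOrderedRing K] {P : Matrix ι ι K} (hP : P.PosSemidef)
    {θ : K} (hθ : 0 < θ) : IsUnit (P + θ • 1) :=
  (PosDef.posSemidef_add hP (PosDef.one.smul hθ)).isUnit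

/-- Q = θ(P+θI)⁻¹((R+θI)⁻¹(θI−P) − I) satisfies
I + 2Q = (P+θI)⁻¹(R+θI)⁻¹(θI−R)(θI−P). -/
theorem admm_I_add_two_Q_identity {m n : ℕ} (θ μ : ℝ) (hθ : 0 < θ) (hμ : 0 < μ)
    (A : Matrix (Fin m) (Fin n) ℝ) (L : Matrix (Fin n) (Fin n) ℝ)
    (P R : Matrix (Fin n) (Fin n) ℝ)
    (hP : P = μ • (Aᵀ * A)) (hR : R = Lᵀ * L) :
    (1 : Matrix (Fin n) (Fin n) ℝ) +
      (2 : ℝ) • (θ • ((P + θ • (1 : Matrix (Fin n) (Fin n) ℝ))⁻¹ *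
        ((R + θ • (1 : Matrix (Fin n) (Fin n) ℝ))⁻¹ *
          (θ • (1 : Matrix (Fin n) (Fin n) ℝ) - P) - 1))) =
      (P + θ • (1 : Matrix (Fin n) (Fin n) ℝ))⁻¹ *
        ((R + θ • (1 : Matrix (Fin n) (Fin n) ℝ))⁻¹ *
          ((θ • (1 : Matrix (Fin n) (Fin n) ℝ) - R) *
            (θ • (1 : Matrix (Fin n) (Fin n) ℝ) - P))) := by
  have hPsd : P.PosSemidef := by
    simpa [hP] using (posSemidef_conjTranspose_mul_self A).smul hμ.le
  have hRsd : R.PosSemidef := by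
    simpa [hR] using posSemidef_conjTranspose_mul_self L
  exact one_add_two_smul_smul_inv_mul_eq θ P R (hPsd.isUnit_add_smul_one hθ)
    (hRsd.isUnit_add_smul_one hθ)
end

section
/- Let P and R be real symmetric positive semidefinite n×n matrices and θ > 0, and define Q = θ(P+θI)⁻¹((R+θI)⁻¹(θI−P) − I). Then every complex eigenvalue z of I + 2Q satisfies |z| ≤ 1; equivalently, the spectral radius of I + 2Q is at most 1. -/
/-!
Write `A = P + θI`, `B = R + θI` and `C_S = (θI - S)(S + θI)⁻¹` for the Cayley transform of a
positive semidefinite `S`. Since `I - C_Sᴴ C_S = (S + θI)⁻¹ (4θS) (S + θI)⁻¹ ⪰ 0`, each `C_S` is a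
contraction in the operator 2-norm. A direct computation gives `A (I + 2Q) A⁻¹ = C_R C_P`, so the
spectrum of `I + 2Q` is that of `C_R C_P`, which lies in the disc of radius `‖C_R‖ ‖C_P‖ ≤ 1`.
-/

open Matrix
open scoped ComplexOrder Matrix.Norms.L2Operator

theorem CStarRing.norm_le_norm_of_mem_spectrum {A : Type*} [NormedRing A] [StarRing A]
    [CStarRing A] [NormedAlgebra ℂ A] [CompleteSpace A] {a : A} {z : ℂ}
    (hz : z ∈ spectrum ℂ a) : ‖z‖ ≤ ‖a‖ := by
  cases subsingleton_or_nontrivial A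
  · simp [spectrum.of_subsingleton] at hz
  · exact spectrum.norm_le_norm_of_mem hz

namespace Matrix

section

variable {n 𝕜 : Type*} [RCLike 𝕜]

theorem PosSemidef.posDef_add_smul_one [DecidableEq n] {S : Matrix n n 𝕜} (hS : S.PosSemidef)
    {θ : ℝ} (hθ : 0 < θ) : (S + θ • 1).PosDef :=
  PosDef.posSemidef_add hS (PosDef.one.smul hθ)

theorem PosSemidef.map_algebraMap [Fintype n] {M : Matrix n n ℝ} (hM : M.PosSemidef) :
    (M.map (algebraMap ℝ 𝕜)).PosSemidef := by
  classical
  open scoped MatrixOrder in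
  obtain ⟨S, rfl⟩ := CStarAlgebra.nonneg_iff_eq_star_mul_self.mp hM.nonneg
  rw [star_eq_conjTranspose, Matrix.map_mul, conjTranspose_map _ (algebraMap_star_comm ·)]
  exact posSemidef_conjTranspose_mul_self _

end

variable {n : Type*} [Fintype n] [DecidableEq n]

theorem map_nonsing_inv {K L : Type*} [Field K] [Field L] (f : K →+* L) (A : Matrix n n K) :
    A⁻¹.map f = (A.map f)⁻¹ := by
  rw [inv_def, inv_def, ← f.mapMatrix_apply, ← f.mapMatrix_apply, ← f.map_adjugate, ← f.map_det]
  ext i j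
  simp

theorem spectrum_mul_mul_nonsing_inv {R α : Type*} [CommSemiring R] [CommRing α]
    [Algebra R (Matrix n n α)] (M : Matrix n n α) {A : Matrix n n α} (hA : IsUnit A) :
    spectrum R (A * M * A⁻¹) = spectrum R M := by
  obtain ⟨u, rfl⟩ := hA
  rw [← coe_units_inv, spectrum.units_conjugate]

theorem one_sub_conjTranspose_mul_inv_mul_mul_inv {R : Type*} [CommRing R] [StarRing R]
    (X A : Matrix n n R) (hA : IsUnit A.det) :
    1 - (X * A⁻¹)ᴴ * (X * A⁻¹) = A⁻¹ᴴ * (Aᴴ * A - Xᴴ * X) * A⁻¹ := by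
  have hA' : A⁻¹ᴴ * Aᴴ = 1 := by
    rw [← conjTranspose_mul, mul_nonsing_inv A hA, conjTranspose_one]
  simp only [conjTranspose_mul, Matrix.mul_sub, Matrix.sub_mul, Matrix.mul_assoc,
    mul_nonsing_inv A hA, Matrix.mul_one]
  rw [← Matrix.mul_assoc, hA']

theorem l2_opNorm_le_one_of_posSemidef_one_sub {C : Matrix n n ℂ}
    (h : (1 - Cᴴ * C).PosSemidef) : ‖C‖ ≤ 1 := by
  open scoped MatrixOrder in
  have hCC : ‖Cᴴ * C‖ ≤ 1 :=
    (CStarAlgebra.norm_le_one_iff_of_nonneg _ (posSemidef_conjTranspose_mul_self C).nonneg).mpr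
      (le_iff.mpr h)
  rw [← star_eq_conjTranspose, CStarRing.norm_star_mul_self] at hCC
  exact (sq_le_one_iff₀ (norm_nonneg _)).mp (by rwa [sq])

variable {𝕜 : Type*} [RCLike 𝕜]

noncomputable def cayley (θ : ℝ) (S : Matrix n n 𝕜) : Matrix n n 𝕜 :=
  (θ • 1 - S) * (S + θ • 1)⁻¹

theorem cayley_eq_smul_inv_sub_one {S : Matrix n n 𝕜} {θ : ℝ} (hS : IsUnit (S + θ • 1).det) :
    cayley θ S = (2 * θ) • (S + θ • 1)⁻¹ - 1 := by
  have : θ • (1 : Matrix n n 𝕜) - S = (2 * θ) • 1 - (S + θ • 1) := by module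
  rw [cayley, this, Matrix.sub_mul, Matrix.smul_mul, Matrix.one_mul, mul_nonsing_inv _ hS]

theorem cayley_mul_cayley_eq {P R : Matrix n n 𝕜} {θ : ℝ} (hP : IsUnit (P + θ • 1).det)
    (hR : IsUnit (R + θ • 1).det) :
    cayley θ R * cayley θ P = (P + θ • 1) *
      (1 + (2 : ℝ) • θ • ((P + θ • 1)⁻¹ * ((R + θ • 1)⁻¹ * (θ • 1 - P) - 1))) *
        (P + θ • 1)⁻¹ := by
  calc cayley θ R * cayley θ P
      = (2 * θ) • ((R + θ • 1)⁻¹ * (θ • 1 - P) * (P + θ • 1)⁻¹) - cayley θ P := by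
        rw [cayley_eq_smul_inv_sub_one hR, Matrix.sub_mul, Matrix.one_mul, Matrix.smul_mul,
          cayley, Matrix.mul_assoc]
    _ = _ := by
        rw [cayley_eq_smul_inv_sub_one hP]
        simp only [Matrix.mul_add, Matrix.add_mul, Matrix.mul_one, Matrix.mul_smul,
          Matrix.smul_mul, Matrix.mul_sub, Matrix.sub_mul, ← Matrix.mul_assoc (P + θ • 1),
          mul_nonsing_inv _ hP, Matrix.one_mul]
        module

theorem PosSemidef.one_sub_conjTranspose_cayley_mul_cayley {S : Matrix n n 𝕜}
    (hS : S.PosSemidef) {θ : ℝ} (hθ : 0 < θ) : (1 - (cayley θ S)ᴴ * cayley θ S).PosSemidef := by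
  have hA := hS.posDef_add_smul_one hθ
  have hsq : (S + θ • 1)ᴴ * (S + θ • 1) - (θ • 1 - S)ᴴ * (θ • 1 - S) = (4 * θ) • S := by
    simp only [conjTranspose_add, conjTranspose_sub, conjTranspose_smul, conjTranspose_one,
      hS.isHermitian.eq, star_trivial, Matrix.sub_mul, Matrix.mul_sub, Matrix.add_mul,
      Matrix.mul_add, Matrix.smul_mul, Matrix.mul_smul, Matrix.one_mul, Matrix.mul_one]
    module
  rw [cayley, one_sub_conjTranspose_mul_inv_mul_mul_inv _ _
    ((isUnit_iff_isUnit_det _).mp hA.isUnit), hsq]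
  exact (hS.smul (by positivity)).conjTranspose_mul_mul_same _

theorem PosSemidef.norm_cayley_le_one {S : Matrix n n ℂ} (hS : S.PosSemidef) {θ : ℝ}
    (hθ : 0 < θ) : ‖cayley θ S‖ ≤ 1 :=
  l2_opNorm_le_one_of_posSemidef_one_sub (hS.one_sub_conjTranspose_cayley_mul_cayley hθ)

end Matrix

/-- Let P and R be real symmetric positive semidefinite n×n matrices and θ > 0, and
define Q = θ(P+θI)⁻¹((R+θI)⁻¹(θI−P) − I). Then every complex eigenvalue z of I + 2Q
satisfies |z| ≤ 1, i.e. the spectral radius of I + 2Q is at most 1. -/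
theorem spectral_radius_I_add_two_Q_le_one {n : ℕ} (θ : ℝ) (hθ : 0 < θ)
    (P R Q : Matrix (Fin n) (Fin n) ℝ)
    (hP : P.PosSemidef) (hR : R.PosSemidef)
    (hQ : Q = θ • ((P + θ • (1 : Matrix (Fin n) (Fin n) ℝ))⁻¹ *
      ((R + θ • (1 : Matrix (Fin n) (Fin n) ℝ))⁻¹ *
        (θ • (1 : Matrix (Fin n) (Fin n) ℝ) - P) - 1))) :
    ∀ z ∈ spectrum ℂ
      (((1 : Matrix (Fin n) (Fin n) ℝ) + (2 : ℝ) • Q).map (algebraMap ℝ ℂ)),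
      ‖z‖ ≤ 1 := by
  intro z hz
  let φ := (Algebra.ofId ℝ ℂ).mapMatrix (m := Fin n)
  have hφ : ∀ M, φ M = M.map (algebraMap ℝ ℂ) := fun _ => rfl
  have hφ_inv : ∀ M, φ M⁻¹ = (φ M)⁻¹ := map_nonsing_inv (algebraMap ℝ ℂ)
  have hPc : (φ P).PosSemidef := hP.map_algebraMap
  have hRc : (φ R).PosSemidef := hR.map_algebraMap
  have hAc := (hPc.posDef_add_smul_one hθ).isUnit
  have hBc := (hRc.posDef_add_smul_one hθ).isUnit
  simp only [← hφ, hQ, map_add, map_one, map_smul, map_mul, map_sub, hφ_inv] at hz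
  rw [← spectrum_mul_mul_nonsing_inv _ hAc, ← cayley_mul_cayley_eq
    ((isUnit_iff_isUnit_det _).mp hAc) ((isUnit_iff_isUnit_det _).mp hBc)] at hz
  calc ‖z‖ ≤ ‖cayley θ (φ R) * cayley θ (φ P)‖ := CStarRing.norm_le_norm_of_mem_spectrum hz
    _ ≤ ‖cayley θ (φ R)‖ * ‖cayley θ (φ P)‖ := norm_mul_le _ _
    _ ≤ 1 := mul_le_one₀ (hRc.norm_cayley_le_one hθ) (norm_nonneg _) (hPc.norm_cayley_le_one hθ)
end
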